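/- arXiv:2512.04438 — 3 statements merged into one kernel-verified Lean document; each statement's English description precedes it below -/
import Mathlib

section
/- Let A and B be skew-symmetric n×n matrices over ℂ that are block-diagonal with identical block structure, each pair of corresponding blocks being of one of the three canonical Jordan–Kronecker types: (i) A_i = [[0, J_m(λ_i)], [−J_m(λ_i)ᵀ, 0]], B_i = [[0, I_m], [−I_m, 0]] for some λ_i ∈ ℂ; (ii) A_i = [[0, I_m], [−I_m, 0]], B_i = [[0, J_m(0)], [−J_m(0)ᵀ, 0]]; (iii) Kronecker blocks of odd size 2k+1 (k ≥ 0) with A_i = [[0, S_k], [−S_kᵀ, 0]], B_i = [[0, T_k], [−T_kᵀ, 0]], where S_k = (I_k | 0) and T_k = (0 | I_k) are k×(k+1). Then the number of Kronecker blocks (blocks of type (iii)) equals n − max_{λ∈ℂ} rank(A + λB). -/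
/-! The rank of a block-diagonal pencil is the sum of the ranks of its blocks, and each block
`[[0, X + λY], [-(X + λY)ᵀ, 0]]` has rank `2 · rank (X + λY)`. For a Jordan block `X + λY` is an
upper triangular `m × m` matrix whose diagonal is `λᵢ + λ` or `1`, so the block has full rank
`2m` except for at most one `λ`. For a Kronecker block, `S_k + λT_k` has rank `k` for every `λ`:
it has `k` rows, and deleting its last column leaves an upper unitriangular matrix. Hence
`rank (A + λB) ≤ n - #Kronecker` always, with equality for all but finitely many `λ`. -/

open Matrix

noncomputable section

/-- The `m × m` upper-triangular Jordan block with eigenvalue `lam`: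
`lam` on the diagonal, `1` on the superdiagonal. -/
def jordanBlk (m : ℕ) (lam : ℂ) : Matrix (Fin m) (Fin m) ℂ :=
  Matrix.of fun i j =>
    if (i : ℕ) = (j : ℕ) then lam else if (j : ℕ) = (i : ℕ) + 1 then 1 else 0

/-- The skew-symmetric block `[[0, M], [-Mᵀ, 0]]` built from a `p × q` matrix `M`. -/
def skewPair {p q : Type} [Fintype p] [Fintype q] (M : Matrix p q ℂ) :
    Matrix (p ⊕ q) (p ⊕ q) ℂ :=
  Matrix.fromBlocks 0 M (-Mᵀ) 0

/-- `S_k = (I_k | 0)`, the `k × (k+1)` matrix obtained from `I_k` by appending a zero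
column on the right. -/
def Sk (k : ℕ) : Matrix (Fin k) (Fin (k + 1)) ℂ :=
  Matrix.of fun i j => if (i : ℕ) = (j : ℕ) then 1 else 0

/-- `T_k = (0 | I_k)`, the `k × (k+1)` matrix obtained from `I_k` by appending a zero
column on the left. -/
def Tk (k : ℕ) : Matrix (Fin k) (Fin (k + 1)) ℂ :=
  Matrix.of fun i j => if (j : ℕ) = (i : ℕ) + 1 then 1 else 0

/-- The three types of blocks in the Jordan–Kronecker decomposition. -/
inductive JKType : Type
  | jordanFinite (m : ℕ) (lam : ℂ)   -- Jordan block with finite eigenvalue `lam`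
  | jordanInfinite (m : ℕ)           -- Jordan block with eigenvalue ∞
  | kronecker (k : ℕ)                -- Kronecker block of (odd) size `2k + 1`

/-- The size of a canonical block of the given type. -/
def JKType.size : JKType → ℕ
  | .jordanFinite m _ => m + m
  | .jordanInfinite m => m + m
  | .kronecker k => k + (k + 1)

/-- The `A`-part of the canonical pair of blocks of the given type. -/
def JKType.Amat : (t : JKType) → Matrix (Fin t.size) (Fin t.size) ℂ
  | .jordanFinite m lam =>
      (Matrix.reindex finSumFinEquiv finSumFinEquiv) (skewPair (jordanBlk m lam))
  | .jordanInfinite m =>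
      (Matrix.reindex finSumFinEquiv finSumFinEquiv)
        (skewPair (1 : Matrix (Fin m) (Fin m) ℂ))
  | .kronecker k =>
      (Matrix.reindex finSumFinEquiv finSumFinEquiv) (skewPair (Sk k))

/-- The `B`-part of the canonical pair of blocks of the given type. -/
def JKType.Bmat : (t : JKType) → Matrix (Fin t.size) (Fin t.size) ℂ
  | .jordanFinite m _ =>
      (Matrix.reindex finSumFinEquiv finSumFinEquiv)
        (skewPair (1 : Matrix (Fin m) (Fin m) ℂ))
  | .jordanInfinite m =>
      (Matrix.reindex finSumFinEquiv finSumFinEquiv) (skewPair (jordanBlk m 0))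
  | .kronecker k =>
      (Matrix.reindex finSumFinEquiv finSumFinEquiv) (skewPair (Tk k))


/-- Whether a block type is a Kronecker block. -/
def JKType.isKronecker : JKType → Bool
  | .kronecker _ => true
  | _ => false

namespace LinearMap

variable {K ι : Type*} [Field K] [Fintype ι] {φ ψ : ι → Type*}
  [∀ i, AddCommGroup (φ i)] [∀ i, Module K (φ i)]
  [∀ i, AddCommGroup (ψ i)] [∀ i, Module K (ψ i)] [∀ i, FiniteDimensional K (ψ i)]

theorem finrank_range_piMap (f : ∀ i, φ i →ₗ[K] ψ i) :
    Module.finrank K (range (piMap f)) = ∑ i, Module.finrank K (range (f i)) := by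
  have hfactor : piMap f = piMap (fun i => (range (f i)).subtype) ∘ₗ
      piMap (fun i => (f i).rangeRestrict) := rfl
  rw [hfactor, range_comp_of_range_eq_top _
      (range_eq_top.2 (Function.Surjective.piMap fun i => (f i).surjective_rangeRestrict)),
    finrank_range_of_inj (Function.Injective.piMap fun i => (range (f i)).injective_subtype),
    Module.finrank_pi_fintype]

theorem finrank_range_prodMap {K M₁ M₂ M₃ M₄ : Type*} [Field K]
    [AddCommGroup M₁] [Module K M₁] [AddCommGroup M₂] [Module K M₂] [FiniteDimensional K M₂]
    [AddCommGroup M₃] [Module K M₃] [AddCommGroup M₄] [Module K M₄] [FiniteDimensional K M₄]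
    (f : M₁ →ₗ[K] M₂) (g : M₃ →ₗ[K] M₄) :
    Module.finrank K (range (prodMap f g)) =
      Module.finrank K (range f) + Module.finrank K (range g) := by
  have hfactor : prodMap f g = prodMap (range f).subtype (range g).subtype ∘ₗ
      prodMap f.rangeRestrict g.rangeRestrict := rfl
  rw [hfactor, range_comp_of_range_eq_top _ (range_eq_top.2
      (f.surjective_rangeRestrict.prodMap g.surjective_rangeRestrict)),
    finrank_range_of_inj ((range f).injective_subtype.prodMap (range g).injective_subtype),
    Module.finrank_prod]

end LinearMap

namespace Matrix

variable {K : Type*} [Field K]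

theorem rank_blockDiagonal' {o : Type*} [Fintype o] [DecidableEq o] {m' n' : o → Type*}
    [∀ i, Fintype (m' i)] [∀ i, Fintype (n' i)] (M : ∀ i, Matrix (m' i) (n' i) K) :
    (blockDiagonal' M).rank = ∑ i, (M i).rank := by
  let curryCols := LinearEquiv.piCurry K fun (i : o) (_ : n' i) => K
  let curryRows := LinearEquiv.piCurry K fun (i : o) (_ : m' i) => K
  have hfactor : (blockDiagonal' M).mulVecLin = curryRows.symm.toLinearMap ∘ₗ
      LinearMap.piMap (fun i => (M i).mulVecLin) ∘ₗ curryCols.toLinearMap := by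
    ext v ⟨i, j⟩
    simp [curryCols, curryRows, mulVec, dotProduct, blockDiagonal'_apply,
      ← Finset.univ_sigma_univ, Finset.sum_sigma, Sigma.uncurry, Sigma.curry]
  rw [rank, hfactor, LinearMap.range_comp, LinearMap.range_comp, LinearEquiv.range,
    Submodule.map_top, LinearEquiv.finrank_map_eq, LinearMap.finrank_range_piMap]
  rfl

theorem rank_fromBlocks_zero₁₂_zero₂₁ {p q r s : Type*} [Fintype p] [Fintype q] [Fintype r]
    [Fintype s] (A : Matrix p q K) (D : Matrix r s K) :
    (fromBlocks A 0 0 D).rank = A.rank + D.rank := by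
  have hfactor : (fromBlocks A 0 0 D).mulVecLin =
      (LinearEquiv.sumArrowLequivProdArrow p r K K).symm.toLinearMap ∘ₗ
        LinearMap.prodMap A.mulVecLin D.mulVecLin ∘ₗ
          (LinearEquiv.sumArrowLequivProdArrow q s K K).toLinearMap := by
    ext v (i | i) <;> simp [fromBlocks_mulVec] <;> rfl
  rw [rank, hfactor, LinearMap.range_comp, LinearMap.range_comp, LinearEquiv.range,
    Submodule.map_top, LinearEquiv.finrank_map_eq, LinearMap.finrank_range_prodMap]
  rfl

theorem rank_neg {R m n : Type*} [CommRing R] [Fintype n] (A : Matrix m n R) :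
    (-A).rank = A.rank := by
  have hneg : (-A).mulVecLin = -A.mulVecLin := LinearMap.ext fun v => neg_mulVec v A
  rw [rank, rank, hneg, LinearMap.range_neg]

theorem BlockTriangular.smul {S R m α : Type*} [LT α] [Zero R] [SMulZeroClass S R]
    {M : Matrix m m R} {b : m → α} (hM : M.BlockTriangular b) (c : S) :
    (c • M).BlockTriangular b :=
  fun _ _ h => by simp [hM h]

theorem reindex_add_smul {S R m n m' n' : Type*} [Add R] [SMul S R] (e₁ : m ≃ m') (e₂ : n ≃ n')
    (X Y : Matrix m n R) (c : S) : reindex e₁ e₂ X + c • reindex e₁ e₂ Y = reindex e₁ e₂ (X + c • Y) := by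
  ext
  simp

theorem rank_eq_card_of_isUpperTriangular {R n : Type*} [CommRing R] [IsDomain R] [Fintype n]
    [LinearOrder n] {M : Matrix n n R} (hM : M.IsUpperTriangular) (hdiag : ∀ i, M i i ≠ 0) :
    M.rank = Fintype.card n := by
  classical
  exact rank_of_det_ne_zero <| by
    rw [det_of_isUpperTriangular hM]
    exact Finset.prod_ne_zero_iff.2 fun i _ => hdiag i

end Matrix

theorem rank_skewPair {p q : Type} [Fintype p] [Fintype q] (M : Matrix p q ℂ) :
    (skewPair M).rank = 2 * M.rank := by
  have hswap :
      skewPair M = reindex (Equiv.refl _) (Equiv.sumComm q p) (fromBlocks M 0 0 (-Mᵀ)) := by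
    ext (i | i) (j | j) <;> rfl
  rw [hswap, rank_reindex, rank_fromBlocks_zero₁₂_zero₂₁, rank_neg, rank_transpose, two_mul]

theorem rank_reindex_skewPair_add_smul {p q r : Type} [Fintype p] [Fintype q] [Fintype r]
    (e : p ⊕ q ≃ r) (X Y : Matrix p q ℂ) (lam : ℂ) :
    (reindex e e (skewPair X) + lam • reindex e e (skewPair Y)).rank = 2 * (X + lam • Y).rank := by
  have hpencil : reindex e e (skewPair X) + lam • reindex e e (skewPair Y) =
      reindex e e (skewPair (X + lam • Y)) := by
    have hskew : skewPair X + lam • skewPair Y = skewPair (X + lam • Y) := by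
      simp [skewPair, fromBlocks_smul, fromBlocks_add, -neg_add_rev, neg_add]
    rw [reindex_add_smul, hskew]
  rw [hpencil, rank_reindex, rank_skewPair]

theorem isUpperTriangular_jordanBlk (m : ℕ) (μ : ℂ) : (jordanBlk m μ).IsUpperTriangular :=
  fun i j (hji : j < i) => by
    have hne : (i : ℕ) ≠ j := by omega
    have hnsucc : (j : ℕ) ≠ i + 1 := by omega
    simp [jordanBlk, hne, hnsucc]

theorem rank_jordanBlk_add_smul_one {m : ℕ} {μ lam : ℂ} (h : μ + lam ≠ 0) :
    (jordanBlk m μ + lam • (1 : Matrix (Fin m) (Fin m) ℂ)).rank = m := by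
  simpa using rank_eq_card_of_isUpperTriangular
    ((isUpperTriangular_jordanBlk m μ).add (blockTriangular_one.smul lam))
    fun i => by simpa [jordanBlk] using h

theorem rank_one_add_smul_jordanBlk_zero (m : ℕ) (lam : ℂ) :
    ((1 : Matrix (Fin m) (Fin m) ℂ) + lam • jordanBlk m 0).rank = m := by
  simpa using rank_eq_card_of_isUpperTriangular
    (blockTriangular_one.add ((isUpperTriangular_jordanBlk m 0).smul lam))
    fun i => by simp [jordanBlk]

theorem Sk_add_smul_Tk_submatrix_castSucc (k : ℕ) (lam : ℂ) :
    (Sk k + lam • Tk k).submatrix id Fin.castSucc = 1 + lam • jordanBlk k 0 := by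
  ext i j
  by_cases h : (j : ℕ) = i + 1 <;> simp [Sk, Tk, jordanBlk, one_apply, Fin.ext_iff, h]

theorem rank_Sk_add_smul_Tk (k : ℕ) (lam : ℂ) : (Sk k + lam • Tk k).rank = k :=
  le_antisymm (rank_le_height _) <| by
    simpa [Sk_add_smul_Tk_submatrix_castSucc, rank_one_add_smul_jordanBlk_zero] using
      rank_submatrix_le (Sk k + lam • Tk k) id Fin.castSucc

namespace JKType

open Filter

theorem rank_pencil_jordanFinite {m : ℕ} {μ lam : ℂ} (h : μ + lam ≠ 0) :
    ((jordanFinite m μ).Amat + lam • (jordanFinite m μ).Bmat).rank = m + m :=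
  (rank_reindex_skewPair_add_smul _ _ _ lam).trans <| by
    rw [rank_jordanBlk_add_smul_one h, two_mul]

theorem rank_pencil_jordanInfinite (m : ℕ) (lam : ℂ) :
    ((jordanInfinite m).Amat + lam • (jordanInfinite m).Bmat).rank = m + m :=
  (rank_reindex_skewPair_add_smul _ _ _ lam).trans <| by
    rw [rank_one_add_smul_jordanBlk_zero, two_mul]

theorem rank_pencil_kronecker (k : ℕ) (lam : ℂ) :
    ((kronecker k).Amat + lam • (kronecker k).Bmat).rank = k + k :=
  (rank_reindex_skewPair_add_smul _ _ _ lam).trans (by rw [rank_Sk_add_smul_Tk, two_mul])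

theorem rank_pencil_add_le_size (t : JKType) (lam : ℂ) :
    (t.Amat + lam • t.Bmat).rank + (if t.isKronecker then 1 else 0) ≤ t.size := by
  cases t with
  | kronecker k => rw [rank_pencil_kronecker]; simp [size, isKronecker]
  | _ => simpa [isKronecker] using rank_le_height _

theorem eventually_rank_pencil_add_eq_size (t : JKType) :
    ∀ᶠ lam : ℂ in cofinite,
      (t.Amat + lam • t.Bmat).rank + (if t.isKronecker then 1 else 0) = t.size := by
  cases t with
  | jordanFinite m μ =>
    filter_upwards [eventually_cofinite_ne (-μ)] with lam hlam
    rw [rank_pencil_jordanFinite (fun h => hlam (eq_neg_of_add_eq_zero_right h))]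
    rfl
  | jordanInfinite m => exact .of_forall fun lam => by rw [rank_pencil_jordanInfinite]; rfl
  | kronecker k => exact .of_forall fun lam => by rw [rank_pencil_kronecker]; rfl

end JKType

/-- If skew-symmetric `A`, `B` are simultaneously block-diagonal in the canonical
Jordan–Kronecker form, then the number of Kronecker blocks equals
`n - max_{λ ∈ ℂ} rank (A + λB)`. -/
theorem kronecker_block_count (n N : ℕ) (t : Fin N → JKType)
    (e : (Σ i, Fin (t i).size) ≃ Fin n)
    (A B : Matrix (Fin n) (Fin n) ℂ)
    (hA : A = (Matrix.reindex e e) (Matrix.blockDiagonal' fun i => (t i).Amat))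
    (hB : B = (Matrix.reindex e e) (Matrix.blockDiagonal' fun i => (t i).Bmat))
    (R : ℕ) (hR : IsGreatest {r : ℕ | ∃ lam : ℂ, (A + lam • B).rank = r} R) :
    (Finset.univ.filter fun i => (t i).isKronecker = true).card = n - R := by
  have hsize : ∑ i, (t i).size = n := by
    simpa using Fintype.card_congr e
  have hrank (lam : ℂ) : (A + lam • B).rank = ∑ i, ((t i).Amat + lam • (t i).Bmat).rank := by
    rw [hA, hB, reindex_add_smul, rank_reindex, ← blockDiagonal'_smul, ← blockDiagonal'_add,
      rank_blockDiagonal']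
    rfl
  set K := (Finset.univ.filter fun i => (t i).isKronecker = true).card
  have hK : K = ∑ i, if (t i).isKronecker then 1 else 0 := Finset.card_filter _ _
  have hle (lam : ℂ) : (A + lam • B).rank + K ≤ n := by
    rw [hrank, hK, ← Finset.sum_add_distrib, ← hsize]
    exact Finset.sum_le_sum fun i _ => (t i).rank_pencil_add_le_size lam
  obtain ⟨lam, hlam⟩ :=
    (Filter.eventually_all.2 fun i => (t i).eventually_rank_pencil_add_eq_size).exists
  have heq : (A + lam • B).rank + K = n := by
    rw [hrank, hK, ← Finset.sum_add_distrib, ← hsize]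
    exact Finset.sum_congr rfl fun i _ => hlam i
  obtain ⟨lam₀, hlam₀⟩ := hR.1
  have hupper : R + K ≤ n := hlam₀ ▸ hle lam₀
  have hgeneric : (A + lam • B).rank ≤ R := hR.2 ⟨lam, rfl⟩
  omega
end
end

section
/- Let G be the 4-dimensional complex Lie algebra with basis e_1, e_2, e_3, e_4 and non-trivial Lie brackets [e_3, e_1] = e_1 and [e_3, e_4] = e_2, and for x ∈ ℂ^4 let A_x be the associated 4×4 skew-symmetric matrix with rows (0, 0, −x_1, 0), (0, 0, 0, 0), (x_1, 0, 0, x_2), (0, 0, −x_2, 0). Then there exists a nonzero polynomial F in 8 variables over ℂ such that for every (x, a) ∈ ℂ^4 × ℂ^4 with F(x, a) ≠ 0 and every (α, β) ∈ ℂ² with (α, β) ≠ (0, 0), one has rank(αA_x + βA_a) = 2 = max_{y ∈ ℂ^4} rank A_y. (Hence the generic pencil has no Jordan blocks, i.e. G is of Kronecker type.) -/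
/-!
`A_y = e₃ wᵀ - w e₃ᵀ` with `w = (y₁, 0, 0, y₂)`, so `rank A_y ≤ 2`, with equality as soon as
`(y₁, y₂) ≠ 0` (then one of the minors `y₁²`, `y₂²` is nonzero). Since `y ↦ A_y` is linear,
`α A_x + β A_a = A_{αx + βa}`, and `(αx + βa)₁,₂` vanish for some `(α, β) ≠ 0` only if
`F(x, a) = x₁ a₂ - x₂ a₁` vanishes.
-/

open Matrix

noncomputable section

/-- The matrix `A_x` of the 4-dimensional Lie algebra with non-trivial brackets
`[e₃,e₁] = e₁`, `[e₃,e₄] = e₂`: its rows are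
`(0,0,-x₁,0), (0,0,0,0), (x₁,0,0,x₂), (0,0,-x₂,0)`. -/
def Amat4 (x : Fin 4 → ℂ) : Matrix (Fin 4) (Fin 4) ℂ :=
  !![0,   0, -x 0, 0;
     0,   0,  0,   0;
     x 0, 0,  0,   x 1;
     0,   0, -x 1, 0]

theorem Matrix.card_le_rank_of_det_submatrix_ne_zero {m n ι K : Type*} [Field K] [Fintype n]
    [Fintype ι] [DecidableEq ι] (A : Matrix m n K) (r : ι → m) (c : ι → n)
    (h : (A.submatrix r c).det ≠ 0) : Fintype.card ι ≤ A.rank :=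
  (rank_of_det_ne_zero h).symm.trans_le (rank_submatrix_le A r c)

theorem Prod.smul_add_smul_ne_zero_of_det_ne_zero {K : Type*} [Field K] {u v : K × K}
    (h : u.1 * v.2 - u.2 * v.1 ≠ 0) {α β : K} (hαβ : (α, β) ≠ (0, 0)) :
    α • u + β • v ≠ (0, 0) := by
  intro huv
  obtain ⟨h₁, h₂⟩ := Prod.mk_inj.mp huv
  simp only [Prod.smul_fst, Prod.smul_snd, smul_eq_mul] at h₁ h₂
  have hα : α * (u.1 * v.2 - u.2 * v.1) = 0 := by linear_combination v.2 * h₁ - v.1 * h₂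
  have hβ : β * (u.1 * v.2 - u.2 * v.1) = 0 := by linear_combination u.1 * h₂ - u.2 * h₁
  exact hαβ (Prod.ext (by simpa [h] using hα) (by simpa [h] using hβ))

theorem smul_Amat4_add_smul_Amat4 (α β : ℂ) (x a : Fin 4 → ℂ) :
    α • Amat4 x + β • Amat4 a = Amat4 (α • x + β • a) := by
  ext i j
  fin_cases i <;> fin_cases j <;> simp [Amat4, add_comm]

theorem Amat4_eq_mul (y : Fin 4 → ℂ) :
    Amat4 y = !![0, y 0; 0, 0; 1, 0; 0, y 1] * !![y 0, 0, 0, y 1; 0, 0, -1, 0] := by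
  ext i j
  fin_cases i <;> fin_cases j <;> simp [Amat4]

theorem rank_Amat4_le_two (y : Fin 4 → ℂ) : (Amat4 y).rank ≤ 2 := by
  rw [Amat4_eq_mul]
  exact (rank_mul_le_left _ _).trans (rank_le_width _)

theorem rank_Amat4_eq_two {y : Fin 4 → ℂ} (hy : (y 0, y 1) ≠ (0, 0)) : (Amat4 y).rank = 2 := by
  refine le_antisymm (rank_Amat4_le_two y) ?_
  rcases not_and_or.mp (Prod.mk_inj.not.mp hy) with hy0 | hy1
  · simpa using (Amat4 y).card_le_rank_of_det_submatrix_ne_zero ![0, 2] ![0, 2]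
      (by rw [det_fin_two]; simpa [Amat4] using hy0)
  · simpa using (Amat4 y).card_le_rank_of_det_submatrix_ne_zero ![2, 3] ![2, 3]
      (by rw [det_fin_two]; simpa [Amat4] using hy1)

/-- There is a nonzero polynomial `F` in 8 variables such that whenever `F(x,a) ≠ 0`
and `(α, β) ≠ (0, 0)`, one has `rank (α A_x + β A_a) = 2 = max_y rank A_y`. Hence the
generic pencil has no Jordan blocks, i.e. the Lie algebra is of Kronecker type. -/
theorem kronecker_type_example :
    ∃ F : MvPolynomial (Fin 4 ⊕ Fin 4) ℂ, F ≠ 0 ∧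
      (∀ x a : Fin 4 → ℂ, MvPolynomial.eval (Sum.elim x a) F ≠ 0 →
        ∀ α β : ℂ, (α, β) ≠ (0, 0) → (α • Amat4 x + β • Amat4 a).rank = 2) ∧
      IsGreatest {r : ℕ | ∃ y : Fin 4 → ℂ, (Amat4 y).rank = r} 2 := by
  refine ⟨.X (.inl 0) * .X (.inr 1) - .X (.inl 1) * .X (.inr 0), ?_, ?_, ?_, ?_⟩
  · intro hF
    simpa using congrArg (MvPolynomial.eval (Sum.elim ![1, 0, 0, 0] ![0, 1, 0, 0])) hF
  · intro x a hF α β hαβ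
    rw [smul_Amat4_add_smul_Amat4]
    apply rank_Amat4_eq_two
    simpa using Prod.smul_add_smul_ne_zero_of_det_ne_zero (u := (x 0, x 1)) (v := (a 0, a 1))
      (by simpa using hF) hαβ
  · exact ⟨![1, 0, 0, 0], rank_Amat4_eq_two (by simp)⟩
  · rintro r ⟨y, rfl⟩
    exact rank_Amat4_le_two y
end
end

section
/- Let L_1 be the 7-dimensional complex Lie algebra with basis x_1, …, x_7 and non-trivial brackets [x_1,x_2]=x_3, [x_1,x_3]=x_4, [x_1,x_7]=−x_1, [x_2,x_7]=2x_2, [x_3,x_7]=x_3, [x_5,x_6]=−x_5, [x_6,x_7]=x_4. For x ∈ ℂ^7 let A_x be the 7×7 skew-symmetric matrix with (i,j) entry Σ_k c_{ij}^k x_k, where c_{ij}^k are the structure constants of L_1, and let R = max_{y ∈ ℂ^7} rank A_y. Then for every (x, a) ∈ ℂ^7 × ℂ^7 there exists (α, β) ∈ ℂ² with (α, β) ≠ (0, 0) such that rank(αA_x + βA_a) < R. (Together with R < 7, forced since 7 is odd, this shows the generic pencil contains both Jordan and Kronecker blocks, i.e. L_1 is of mixed type.) -/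
/-!
`A_y` depends linearly on `y`, and whenever its fifth coordinate `y₅` (index `4` in Lean)
vanishes, the fourth and fifth rows of `A_y` are zero, so `rank A_y ≤ 5`. On the other hand `A_y` has rank `6` at
`y = e₃ + e₅`, so `R ≥ 6`. For any `x, a`, choosing `(α, β) ≠ 0` with `α x₅ + β a₅ = 0` puts
`αA_x + βA_a = A_{αx + βa}` in the rank-`≤ 5` locus.
-/

open Matrix

noncomputable section

/-- The skew-symmetric matrix `A_x` (with `(i,j)` entry `Σ_k c_ij^k x_k`) of the
7-dimensional complex Lie algebra `L1` with non-trivial brackets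
`[x₁,x₂]=x₃, [x₁,x₃]=x₄, [x₁,x₇]=-x₁, [x₂,x₇]=2x₂, [x₃,x₇]=x₃, [x₅,x₆]=-x₅, [x₆,x₇]=x₄`. -/
def L1mat (x : Fin 7 → ℂ) : Matrix (Fin 7) (Fin 7) ℂ :=
  !![0, x 2, x 3, 0, 0, 0, -x 0;
     -x 2, 0, 0, 0, 0, 0, 2 * x 1;
     -x 3, 0, 0, 0, 0, 0, x 2;
     0, 0, 0, 0, 0, 0, 0;
     0, 0, 0, 0, 0, -x 4, 0;
     0, 0, 0, 0, x 4, 0, x 3;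
     x 0, -2 * x 1, -x 2, 0, 0, -x 3, 0]

lemma L1mat_add (x y : Fin 7 → ℂ) : L1mat (x + y) = L1mat x + L1mat y := by
  ext i j
  fin_cases i <;> fin_cases j <;> simp [L1mat] <;> ring

lemma L1mat_smul (c : ℂ) (x : Fin 7 → ℂ) : L1mat (c • x) = c • L1mat x := by
  ext i j
  fin_cases i <;> fin_cases j <;> simp [L1mat] <;> ring

lemma rank_L1mat_le_five {y : Fin 7 → ℂ} (hy : y 4 = 0) : (L1mat y).rank ≤ 5 := by
  refine (L1mat y).rank_le_card_of_support_subset {0, 1, 2, 5, 6} ?_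
  refine Function.support_subset_iff'.2 fun i hi => ?_
  fin_cases i <;> simp at hi <;> ext j <;> fin_cases j <;> simp [L1mat, hy]

-- At `e₃ + e₅` the matrix is a signed permutation matrix on the six indices other than `3`.
lemma L1mat_mul_transpose :
    L1mat ![0, 0, 1, 0, 1, 0, 0] * (L1mat ![0, 0, 1, 0, 1, 0, 0])ᵀ =
      diagonal fun i => if i = 3 then 0 else 1 := by
  ext i j
  fin_cases i <;> fin_cases j <;> simp [L1mat, mul_apply, Fin.sum_univ_seven]

lemma six_le_rank_L1mat : 6 ≤ (L1mat ![0, 0, 1, 0, 1, 0, 0]).rank :=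
  calc 6 = (diagonal fun i : Fin 7 => if i = 3 then (0 : ℂ) else 1).rank := by
        simp [rank_diagonal, Fintype.card_subtype]; decide
    _ ≤ _ := L1mat_mul_transpose ▸ rank_mul_le_left _ _

lemma exists_ne_zero_mul_add_mul_eq_zero {K : Type*} [CommRing K] [Nontrivial K] (u v : K) :
    ∃ α β : K, (α, β) ≠ (0, 0) ∧ α * u + β * v = 0 := by
  by_cases hv : v = 0
  · exact ⟨0, 1, by simp, by simp [hv]⟩
  · exact ⟨v, -u, by simp [hv], by ring⟩

/-- With `R = max_y rank A_y`, for every pair `(x, a)` there exists `(α, β) ≠ (0, 0)`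
with `rank (α A_x + β A_a) < R`: the generic pencil has Jordan blocks, and together
with `R < 7` this shows `L1` is of mixed type. -/
theorem L1_mixed_type (R : ℕ)
    (hR : IsGreatest {r : ℕ | ∃ y : Fin 7 → ℂ, (L1mat y).rank = r} R) :
    ∀ x a : Fin 7 → ℂ, ∃ α β : ℂ, (α, β) ≠ (0, 0) ∧
      (α • L1mat x + β • L1mat a).rank < R := by
  intro x a
  obtain ⟨α, β, hαβ, hkill⟩ := exists_ne_zero_mul_add_mul_eq_zero (x 4) (a 4)
  have hR6 : 6 ≤ R := six_le_rank_L1mat.trans (hR.2 ⟨_, rfl⟩)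
  have hrank := rank_L1mat_le_five (y := α • x + β • a) (by simpa using hkill)
  rw [L1mat_add, L1mat_smul, L1mat_smul] at hrank
  exact ⟨α, β, hαβ, by omega⟩
end
end
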